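/- arXiv:1708.07131 — 3 statements merged into one kernel-verified Lean document; each statement's English description precedes it below -/
import Mathlib

section
/- With the setup of the preceding block decomposition, ∑_{k∈K} p_k · (p_k / P(block of k)) ≥ 2·(∑_{blocks} probability of the maximal element) − 1. -/
/-- ∑_k p_k·(p_k / P(block of k)) ≥ 2·(∑_{blocks} p(maximal element)) − 1. -/
theorem stmt7 {K S : Type*} [Fintype K] [Fintype S] [DecidableEq S]
    (p : K → ℝ) (hp : ∀ k, 0 ≤ p k) (hsum : ∑ k, p k = 1)
    (b : K → S) (m : S → K)
    (hm : ∀ σ, b (m σ) = σ)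
    (hmax : ∀ k, p k ≤ p (m (b k)))
    (P : S → ℝ)
    (hP : ∀ σ, P σ = ∑ k ∈ Finset.univ.filter (fun k => b k = σ), p k) :
    ∑ k, p k * (p k / P (b k)) ≥ 2 * (∑ σ, p (m σ)) - 1 := by
  have hPsum : ∑ σ, P σ = 1 := by
    rw [← hsum]
    rw [show (∑ σ, P σ) = ∑ σ, ∑ k ∈ Finset.univ.filter (fun k => b k = σ), p k from
      Finset.sum_congr rfl fun σ _ => hP σ]
    exact (Finset.sum_fiberwise Finset.univ b p)
  have hLHS : ∑ k, p k * (p k / P (b k))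
      = ∑ σ, ∑ k ∈ Finset.univ.filter (fun k => b k = σ), p k * (p k / P σ) := by
    rw [← Finset.sum_fiberwise Finset.univ b (fun k => p k * (p k / P (b k)))]
    refine Finset.sum_congr rfl fun σ _ => Finset.sum_congr rfl fun k hk => ?_
    rw [Finset.mem_filter] at hk
    rw [hk.2]
  have key : ∀ σ, 2 * p (m σ) - P σ ≤ ∑ k ∈ Finset.univ.filter (fun k => b k = σ),
      p k * (p k / P σ) := by
    intro σ
    have hmem : m σ ∈ Finset.univ.filter (fun k => b k = σ) := by
      simp [hm σ]
    have hPσ : 0 ≤ P σ := by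
      rw [hP σ]; exact Finset.sum_nonneg fun k _ => hp k
    have hMP : p (m σ) ≤ P σ := by
      rw [hP σ]
      exact Finset.single_le_sum (fun k _ => hp k) hmem
    rcases eq_or_lt_of_le hPσ with h0 | hpos
    · have hM0 : p (m σ) = 0 := le_antisymm (h0 ▸ hMP) (hp _)
      rw [hM0, ← h0]
      simp only [mul_zero, sub_zero]
      refine le_trans (by norm_num) (Finset.sum_nonneg fun k _ => ?_)
      exact mul_nonneg (hp k) (div_nonneg (hp k) (le_refl 0))
    · have h1 : p (m σ) * (p (m σ) / P σ) ≤ ∑ k ∈ Finset.univ.filter (fun k => b k = σ),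
          p k * (p k / P σ) :=
        Finset.single_le_sum (fun k _ => mul_nonneg (hp k) (div_nonneg (hp k) hPσ)) hmem
      refine le_trans ?_ h1
      rw [mul_div_assoc'] at *
      rw [le_div_iff₀ hpos]
      nlinarith [sq_nonneg (p (m σ) - P σ)]
  calc 2 * (∑ σ, p (m σ)) - 1 = ∑ σ, (2 * p (m σ) - P σ) := by
        rw [Finset.sum_sub_distrib, ← Finset.mul_sum, hPsum]
    _ ≤ ∑ σ, ∑ k ∈ Finset.univ.filter (fun k => b k = σ), p k * (p k / P σ) :=
        Finset.sum_le_sum fun σ _ => key σ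
    _ = ∑ k, p k * (p k / P (b k)) := hLHS.symm
end

section
/- Let (q_n) be a sequence of probability distributions on a finite set, each partitioned into blocks with designated maximal elements, and suppose the total probability of maximal elements tends to 1 as n → ∞. Then for any fixed nonzero shift λ acting freely on each block, ∑_k q_n(k) · q_n(k+λ) / P_n(block of k) → 0. -/
/-!
On a block with weights `f ≥ 0` summing to `S`, the overlap term `f i * f j / S` of two distinct
points is at most `min (f i) (f j)`; since any point `m` differs from `i` or from `j`, this minimum
plus `f m` is at most `S`. Taking `m = mx k` and summing over `k` bounds the overlap sum by
`|H| - ∑ₖ q (mx k)`, which tends to `0` by hypothesis.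
-/

open Finset Filter Topology

lemma add_le_sum_of_ne {ι : Type*} [Fintype ι] {f : ι → ℝ} (hf : 0 ≤ f) {i j : ι} (hij : i ≠ j) :
    f i + f j ≤ ∑ x, f x := by
  classical
  simpa [sum_pair hij] using sum_le_univ_sum_of_nonneg (s := {i, j}) hf

lemma mul_div_sum_le_sum_sub_apply {ι : Type*} [Fintype ι] {f : ι → ℝ} (hf : 0 ≤ f)
    {i j : ι} (hij : i ≠ j) (m : ι) :
    f i * f j / ∑ x, f x ≤ ∑ x, f x - f m := by
  have hS : 0 ≤ ∑ x, f x := sum_nonneg fun x _ => hf x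
  have hle : ∀ x, f x ≤ ∑ x, f x := fun x => single_le_sum (fun y _ => hf y) (mem_univ x)
  have hi : f i * f j / ∑ x, f x ≤ f i := by
    rw [mul_div_assoc]
    exact mul_le_of_le_one_right (hf i) (div_le_one_of_le₀ (hle j) hS)
  have hj : f i * f j / ∑ x, f x ≤ f j := by
    rw [mul_comm, mul_div_assoc]
    exact mul_le_of_le_one_right (hf j) (div_le_one_of_le₀ (hle i) hS)
  by_cases hmi : m = i
  · subst hmi
    linarith [add_le_sum_of_ne hf hij]
  · linarith [add_le_sum_of_ne hf hmi]

section Orbits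

variable {K H : Type*} [Fintype K] [AddGroup H] [Fintype H] [AddAction H K]

lemma sum_sum_vadd_eq_card_nsmul {M : Type*} [AddCommMonoid M] (f : K → M) :
    ∑ k, ∑ μ : H, f (μ +ᵥ k) = Fintype.card H • ∑ k, f k := by
  have hperm : ∀ μ : H, ∑ k, f (μ +ᵥ k) = ∑ k, f k := fun μ =>
    Equiv.sum_comp (AddAction.toPerm μ) f
  rw [sum_comm]
  simp only [hperm, sum_const, card_univ]

lemma sum_mul_vadd_div_sum_orbit_le {q : K → ℝ} (hq0 : 0 ≤ q) (hq1 : ∑ k, q k = 1)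
    {mx : K → K} (hmx_orbit : ∀ k, ∃ μ : H, mx k = μ +ᵥ k) {lam : H} (hlam : lam ≠ 0) :
    ∑ k, q k * q (lam +ᵥ k) / ∑ μ : H, q (μ +ᵥ k) ≤ Fintype.card H - ∑ k, q (mx k) := by
  have hblock : ∀ k, q k * q (lam +ᵥ k) / ∑ μ : H, q (μ +ᵥ k)
      ≤ ∑ μ : H, q (μ +ᵥ k) - q (mx k) := by
    intro k
    obtain ⟨μ₀, hμ₀⟩ := hmx_orbit k
    have h := mul_div_sum_le_sum_sub_apply (f := fun μ : H => q (μ +ᵥ k)) (fun μ => hq0 _)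
      hlam.symm μ₀
    simpa only [zero_vadd, ← hμ₀] using h
  calc ∑ k, q k * q (lam +ᵥ k) / ∑ μ : H, q (μ +ᵥ k)
      ≤ ∑ k, (∑ μ : H, q (μ +ᵥ k) - q (mx k)) := sum_le_sum fun k _ => hblock k
    _ = Fintype.card H - ∑ k, q (mx k) := by
      rw [sum_sub_distrib, sum_sum_vadd_eq_card_nsmul, hq1, nsmul_one]

end Orbits

theorem stmt8_general {K : Type*} [Fintype K] {H : Type*} [AddCommGroup H] [Fintype H]
    [AddAction H K]
    (q : ℕ → K → ℝ) (hq0 : ∀ n k, 0 ≤ q n k) (hq1 : ∀ n, ∑ k, q n k = 1)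
    (mx : ℕ → K → K)
    (hmx_orbit : ∀ n k, ∃ μ : H, mx n k = μ +ᵥ k)
    (P : ℕ → K → ℝ) (hP : ∀ n k, P n k = ∑ μ : H, q n (μ +ᵥ k))
    (hsucc : Filter.Tendsto (fun n => (∑ k, q n (mx n k)) / (Fintype.card H : ℝ))
      Filter.atTop (nhds 1))
    (lam : H) (hlam : lam ≠ 0) :
    Filter.Tendsto (fun n => ∑ k, q n k * q n (lam +ᵥ k) / P n k)
      Filter.atTop (nhds 0) := by
  set c : ℝ := (Fintype.card H : ℝ)
  have hc : c ≠ 0 := Nat.cast_ne_zero.mpr Fintype.card_ne_zero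
  have hnonneg : ∀ n, 0 ≤ ∑ k, q n k * q n (lam +ᵥ k) / P n k := fun n =>
    sum_nonneg fun k _ => div_nonneg (mul_nonneg (hq0 n k) (hq0 n _))
      (hP n k ▸ sum_nonneg fun μ _ => hq0 n _)
  have hbound : ∀ n, ∑ k, q n k * q n (lam +ᵥ k) / P n k ≤ c - ∑ k, q n (mx n k) := fun n => by
    simpa only [hP] using sum_mul_vadd_div_sum_orbit_le (hq0 n) (hq1 n) (hmx_orbit n) hlam
  have hlim : Tendsto (fun n => c - ∑ k, q n (mx n k)) atTop (𝓝 0) := by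
    have h := (hsucc.const_mul c).const_sub c
    rw [mul_one, sub_self] at h
    simpa only [mul_div_cancel₀ _ hc] using h
  exact squeeze_zero hnonneg hbound hlim

/-- if the total probability of the designated per-orbit maximal elements
tends to 1, then the λ-shifted overlap sum tends to 0, for any fixed λ ≠ 0 in a finite
abelian group H acting freely on K (orbits are the blocks). The total probability of
maximal elements equals (∑_k q_n(mx_n k))/|H| since each orbit has |H| elements. -/
theorem stmt8 {K : Type*} [Fintype K] {H : Type*} [AddCommGroup H] [Fintype H]
    [AddAction H K]
    (hfree : ∀ (μ : H) (k : K), μ +ᵥ k = k → μ = 0)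
    (q : ℕ → K → ℝ) (hq0 : ∀ n k, 0 ≤ q n k) (hq1 : ∀ n, ∑ k, q n k = 1)
    (mx : ℕ → K → K)
    (hmx_orbit : ∀ n k, ∃ μ : H, mx n k = μ +ᵥ k)
    (hmx_const : ∀ n (μ : H) (k : K), mx n (μ +ᵥ k) = mx n k)
    (hmx_max : ∀ n (k : K) (μ : H), q n (μ +ᵥ k) ≤ q n (mx n k))
    (P : ℕ → K → ℝ) (hP : ∀ n k, P n k = ∑ μ : H, q n (μ +ᵥ k))
    (hsucc : Filter.Tendsto (fun n => (∑ k, q n (mx n k)) / (Fintype.card H : ℝ))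
      Filter.atTop (nhds 1))
    (lam : H) (hlam : lam ≠ 0) :
    Filter.Tendsto (fun n => ∑ k, q n k * q n (lam +ᵥ k) / P n k)
      Filter.atTop (nhds 0) :=
  stmt8_general q hq0 hq1 mx hmx_orbit P hP hsucc lam hlam
end

section
/- Let H be a finite abelian group of order h acting freely on a finite set K, let (p_k) be a probability distribution on K with all p_k > 0, and fix λ ∈ H, λ ≠ 0. Define Δ_λ(k) = log(p_k / p_{k+λ}) and S = ∑_k p_k · p_{k+λ} / P(orbit of k), where P(orbit) = ∑_{μ∈H} p_{k+μ}. Then ∑_k p_k Δ_λ(k) ≥ (1 - h) - log S. -/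
/-- ⟨Δ_λ⟩ = ∑_k p_k log(p_k/p_{k+λ}) ≥ (1 - |H|) - log S. -/
theorem stmt9 {K : Type*} [Fintype K] {H : Type*} [AddCommGroup H] [Fintype H]
    [AddAction H K]
    (hfree : ∀ (μ : H) (k : K), μ +ᵥ k = k → μ = 0)
    (p : K → ℝ) (hp : ∀ k, 0 < p k) (hsum : ∑ k, p k = 1)
    (lam : H) (hlam : lam ≠ 0)
    (Δ : K → ℝ) (hΔ : ∀ k, Δ k = Real.log (p k / p (lam +ᵥ k)))
    (P : K → ℝ) (hP : ∀ k, P k = ∑ μ : H, p (μ +ᵥ k))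
    (S : ℝ) (hS : S = ∑ k, p k * p (lam +ᵥ k) / P k) :
    ∑ k, p k * Δ k ≥ (1 - (Fintype.card H : ℝ)) - Real.log S := by
  -- K is nonempty
  have hKne : (Finset.univ : Finset K).Nonempty := by
    rcases (Finset.univ (α := K)).eq_empty_or_nonempty with h | h
    · rw [h] at hsum; simp at hsum
    · exact h
  have hPpos : ∀ k, 0 < P k := by
    intro k
    rw [hP]
    exact Finset.sum_pos (fun μ _ => hp _) Finset.univ_nonempty
  have hSpos : 0 < S := by
    rw [hS]
    exact Finset.sum_pos
      (fun k _ => div_pos (mul_pos (hp k) (hp _)) (hPpos k)) hKne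
  -- sum of P over K equals |H|
  have hsumP : ∑ k, P k = (Fintype.card H : ℝ) := by
    simp only [hP]
    rw [Finset.sum_comm]
    have h1 : ∀ μ : H, ∑ k, p (μ +ᵥ k) = 1 := by
      intro μ
      rw [← hsum]
      exact Fintype.sum_equiv (AddAction.toPerm μ) _ _ (fun k => rfl)
    simp [h1]
  -- decomposition of Δ
  have hΔ' : ∀ k, Δ k = Real.log (p k / P k) - Real.log (p (lam +ᵥ k) / P k) := by
    intro k
    rw [hΔ, Real.log_div (hp k).ne' (hp _).ne', Real.log_div (hp k).ne' (hPpos k).ne',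
      Real.log_div (hp _).ne' (hPpos k).ne']
    ring
  -- first term bound: p - P ≤ p log(p/P)
  have key1 : (1 : ℝ) - (Fintype.card H : ℝ) ≤ ∑ k, p k * Real.log (p k / P k) := by
    have step : ∀ k ∈ Finset.univ, p k - P k ≤ p k * Real.log (p k / P k) := by
      intro k _
      have h1 : Real.log (P k / p k) ≤ P k / p k - 1 :=
        Real.log_le_sub_one_of_pos (div_pos (hPpos k) (hp k))
      have h2 : Real.log (p k / P k) = - Real.log (P k / p k) := by
        rw [← Real.log_inv, inv_div]
      have h3 : p k * (P k / p k) = P k := by rw [mul_comm, div_mul_cancel₀ _ (hp k).ne']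
      nlinarith [hp k, mul_le_mul_of_nonneg_left h1 (hp k).le]
    calc (1 : ℝ) - (Fintype.card H : ℝ) = ∑ k, (p k - P k) := by
          rw [Finset.sum_sub_distrib, hsum, hsumP]
      _ ≤ ∑ k, p k * Real.log (p k / P k) := Finset.sum_le_sum step
  -- second term bound (Jensen): ∑ p log(p'/P) ≤ log S
  have key2 : ∑ k, p k * Real.log (p (lam +ᵥ k) / P k) ≤ Real.log S := by
    have step : ∀ k ∈ Finset.univ,
        p k * Real.log (p (lam +ᵥ k) / P k)
          ≤ p k * Real.log S + p k * ((p (lam +ᵥ k) / P k) / S) - p k := by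
      intro k _
      have hx : 0 < p (lam +ᵥ k) / P k := div_pos (hp _) (hPpos k)
      have h1 : Real.log ((p (lam +ᵥ k) / P k) / S) ≤ (p (lam +ᵥ k) / P k) / S - 1 :=
        Real.log_le_sub_one_of_pos (div_pos hx hSpos)
      rw [Real.log_div hx.ne' hSpos.ne'] at h1
      nlinarith [hp k, mul_le_mul_of_nonneg_left h1 (hp k).le]
    have hsum2 : ∑ k, p k * ((p (lam +ᵥ k) / P k) / S) = 1 := by
      have h4 : ∀ k ∈ Finset.univ,
          p k * ((p (lam +ᵥ k) / P k) / S) = (p k * p (lam +ᵥ k) / P k) / S := by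
        intro k _; ring
      rw [Finset.sum_congr rfl h4, ← Finset.sum_div, ← hS, div_self hSpos.ne']
    calc ∑ k, p k * Real.log (p (lam +ᵥ k) / P k)
        ≤ ∑ k, (p k * Real.log S + p k * ((p (lam +ᵥ k) / P k) / S) - p k) :=
          Finset.sum_le_sum step
      _ = (∑ k, p k) * Real.log S + (∑ k, p k * ((p (lam +ᵥ k) / P k) / S)) - ∑ k, p k := by
          rw [Finset.sum_sub_distrib, Finset.sum_add_distrib, ← Finset.sum_mul]
      _ = Real.log S := by rw [hsum, hsum2]; ring
  have hsplit : ∑ k, p k * Δ k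
      = (∑ k, p k * Real.log (p k / P k)) - ∑ k, p k * Real.log (p (lam +ᵥ k) / P k) := by
    rw [← Finset.sum_sub_distrib]
    exact Finset.sum_congr rfl (fun k _ => by rw [hΔ' k]; ring)
  rw [hsplit]
  linarith
end
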